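/- Let k ≥ 1, let π be a fixed k-cycle in S_k, and let j₁, j₂ ≥ 2 be integers. Then there is NO triple (σ₁,σ₂,f) where: σ₁, σ₂ are permutations of {1,…,k} with σ₁σ₂ = π; σ₂ has exactly two orbits; σ₁ has exactly j₁+j₂−2 orbits; f is a bijection from the set of orbits of σ₂ to {1,2}; and for each orbit d of σ₂, the number of orbits of σ₁ intersecting d nontrivially is at most j_{f(d)} − 1. (This is the vanishing of the fourth term in the inclusion–exclusion argument in the proof of the combinatorial formula for the quadratic coefficients of Kerov polynomials.) -/

import Mathlib

open Equiv

/-- The orbit of `x` under the permutation `σ`. -/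
def permOrbit {k : ℕ} (σ : Equiv.Perm (Fin k)) (x : Fin k) : Set (Fin k) :=
  {y | ∃ n : ℤ, (σ ^ n) x = y}

/-- The set of orbits of a permutation (fixed points count as singleton orbits). -/
def permOrbits {k : ℕ} (σ : Equiv.Perm (Fin k)) : Set (Set (Fin k)) :=
  Set.range (permOrbit σ)

/-- `κ(σ)`: the number of orbits (cycles, counting fixed points) of `σ`. -/
noncomputable def kappa {k : ℕ} (σ : Equiv.Perm (Fin k)) : ℕ :=
  Nat.card (permOrbits σ)
/-- A full cycle: a permutation of `{1,…,k}` with a single orbit, namely everything. -/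
def IsFullCycle {k : ℕ} (σ : Equiv.Perm (Fin k)) : Prop :=
  ∀ x y : Fin k, ∃ n : ℤ, (σ ^ n) x = y

/-- The number of orbits of `σ₁` which intersect the set `d` nontrivially. -/
noncomputable def numMeeting {k : ℕ} (σ₁ : Equiv.Perm (Fin k)) (d : Set (Fin k)) : ℕ :=
  {c ∈ permOrbits σ₁ | (c ∩ d).Nonempty}.ncard

/-!
Let `d₀, d₁` be the two orbits of `σ₂`, so `d₁ = d₀ᶜ`. Every orbit of `σ₁` meets `d₀` or `d₁`,
so the two meeting numbers add up to at least `κ(σ₁) = j₁ + j₂ - 2`, with equality only if no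
orbit of `σ₁` meets both. The bounds `j₁ - 1` and `j₂ - 1` force equality, so `d₀` is a union
of `σ₁`-orbits as well as a `σ₂`-orbit; hence it is invariant under `π = σ₁σ₂`, which is
impossible for a full cycle since `d₀` is neither empty nor everything.
-/

open MulAction
open scoped Pointwise

variable {k : ℕ}

theorem mem_permOrbit_iff {σ : Perm (Fin k)} {x y : Fin k} :
    y ∈ permOrbit σ x ↔ σ.SameCycle x y :=
  Iff.rfl

theorem mem_permOrbit_self (σ : Perm (Fin k)) (x : Fin k) : x ∈ permOrbit σ x :=
  mem_permOrbit_iff.2 (Perm.SameCycle.refl σ x)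

theorem permOrbit_mem_permOrbits (σ : Perm (Fin k)) (x : Fin k) :
    permOrbit σ x ∈ permOrbits σ :=
  Set.mem_range_self x

theorem nonempty_of_mem_permOrbits {σ : Perm (Fin k)} {c : Set (Fin k)}
    (hc : c ∈ permOrbits σ) : c.Nonempty := by
  obtain ⟨x, rfl⟩ := hc
  exact ⟨x, mem_permOrbit_self σ x⟩

theorem eq_permOrbit_of_mem {σ : Perm (Fin k)} {c : Set (Fin k)} {x : Fin k}
    (hc : c ∈ permOrbits σ) (hx : x ∈ c) : c = permOrbit σ x := by
  obtain ⟨y, rfl⟩ := hc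
  rw [mem_permOrbit_iff] at hx
  ext z
  simp only [mem_permOrbit_iff]
  exact ⟨hx.symm.trans, hx.trans⟩

theorem compl_eq_of_permOrbits_subset_pair {σ : Perm (Fin k)} {d₀ d₁ : Set (Fin k)}
    (h₀ : d₀ ∈ permOrbits σ) (h₁ : d₁ ∈ permOrbits σ) (hne : d₀ ≠ d₁)
    (hsub : permOrbits σ ⊆ {d₀, d₁}) : d₀ᶜ = d₁ := by
  ext x
  constructor
  · intro hx
    rcases hsub (permOrbit_mem_permOrbits σ x) with h | h
    · exact absurd (h ▸ mem_permOrbit_self σ x) hx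
    · exact h ▸ mem_permOrbit_self σ x
  · intro hx₁ hx₀
    exact hne ((eq_permOrbit_of_mem h₀ hx₀).trans (eq_permOrbit_of_mem h₁ hx₁).symm)

theorem mem_stabilizer_of_forall_sameCycle {σ : Perm (Fin k)} {s : Set (Fin k)}
    (h : ∀ x ∈ s, ∀ y, σ.SameCycle x y → y ∈ s) : σ ∈ stabilizer (Perm (Fin k)) s :=
  mem_stabilizer_set.2 fun x =>
    ⟨fun hx => h _ hx x (Perm.sameCycle_apply_left.2 (Perm.SameCycle.refl σ x)),
      fun hx => h x hx _ (Perm.sameCycle_apply_right.2 (Perm.SameCycle.refl σ x))⟩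

theorem mem_stabilizer_of_mem_permOrbits {σ : Perm (Fin k)} {c : Set (Fin k)}
    (hc : c ∈ permOrbits σ) : σ ∈ stabilizer (Perm (Fin k)) c := by
  obtain ⟨x, rfl⟩ := hc
  exact mem_stabilizer_of_forall_sameCycle fun _ hy _ hz => (mem_permOrbit_iff.1 hy).trans hz

theorem kappa_add_ncard_meeting_both (σ : Perm (Fin k)) (d : Set (Fin k)) :
    kappa σ + {c ∈ permOrbits σ | (c ∩ d).Nonempty ∧ (c ∩ dᶜ).Nonempty}.ncard =
      numMeeting σ d + numMeeting σ dᶜ := by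
  have hunion : {c ∈ permOrbits σ | (c ∩ d).Nonempty} ∪ {c ∈ permOrbits σ | (c ∩ dᶜ).Nonempty} =
      permOrbits σ := by
    refine Set.union_subset (Set.sep_subset _ _) (Set.sep_subset _ _) |>.antisymm fun c hc => ?_
    obtain ⟨x, hx⟩ := nonempty_of_mem_permOrbits hc
    by_cases hxd : x ∈ d
    · exact Or.inl ⟨hc, x, hx, hxd⟩
    · exact Or.inr ⟨hc, x, hx, hxd⟩
  rw [numMeeting, numMeeting, ← Set.ncard_union_add_ncard_inter _ _ (Set.toFinite _)
    (Set.toFinite _), hunion, kappa, Nat.card_coe_set_eq, ← Set.sep_and]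

theorem mem_stabilizer_of_numMeeting_add_compl_le {σ : Perm (Fin k)} {d : Set (Fin k)}
    (h : numMeeting σ d + numMeeting σ dᶜ ≤ kappa σ) : σ ∈ stabilizer (Perm (Fin k)) d := by
  have hboth : {c ∈ permOrbits σ | (c ∩ d).Nonempty ∧ (c ∩ dᶜ).Nonempty} = ∅ := by
    rw [← Set.ncard_eq_zero (Set.toFinite _)]
    have := kappa_add_ncard_meeting_both σ d
    omega
  refine mem_stabilizer_of_forall_sameCycle fun x hx y hxy => ?_
  by_contra hy
  have : permOrbit σ x ∈ {c ∈ permOrbits σ | (c ∩ d).Nonempty ∧ (c ∩ dᶜ).Nonempty} :=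
    ⟨permOrbit_mem_permOrbits σ x, ⟨x, mem_permOrbit_self σ x, hx⟩,
      ⟨y, mem_permOrbit_iff.2 hxy, hy⟩⟩
  simp [hboth] at this

theorem IsFullCycle.eq_empty_or_eq_univ_of_mem_stabilizer {π : Perm (Fin k)}
    (hπ : IsFullCycle π) {s : Set (Fin k)} (hs : π ∈ stabilizer (Perm (Fin k)) s) :
    s = ∅ ∨ s = Set.univ := by
  refine s.eq_empty_or_nonempty.imp_right fun ⟨x, hx⟩ => Set.eq_univ_of_forall fun y => ?_
  obtain ⟨n, rfl⟩ := hπ x y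
  exact (mem_stabilizer_set.1 (zpow_mem hs n) x).2 hx

theorem no_triple_with_small_meetings_general (k : ℕ) (π : Equiv.Perm (Fin k))
    (hπ : IsFullCycle π) (j₁ j₂ : ℕ) (hj₁ : 2 ≤ j₁) (hj₂ : 2 ≤ j₂) :
    ¬ ∃ (σ₁ σ₂ : Equiv.Perm (Fin k)) (f : ↥(permOrbits σ₂) → Fin 2),
        σ₁ * σ₂ = π ∧ kappa σ₂ = 2 ∧ kappa σ₁ = j₁ + j₂ - 2 ∧
        Function.Bijective f ∧
        ∀ d : ↥(permOrbits σ₂),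
          numMeeting σ₁ (d : Set (Fin k)) ≤ (if f d = 0 then j₁ else j₂) - 1 := by
  rintro ⟨σ₁, σ₂, f, rfl, -, hκ₁, hf, hmeet⟩
  obtain ⟨d₀, hd₀⟩ := hf.2 0
  obtain ⟨d₁, hd₁⟩ := hf.2 1
  have hne : (d₀ : Set (Fin k)) ≠ d₁ := fun h => by
    simp [Subtype.ext h, hd₁] at hd₀
  have hcompl : (d₀ : Set (Fin k))ᶜ = d₁ := by
    refine compl_eq_of_permOrbits_subset_pair d₀.2 d₁.2 hne fun c hc => ?_
    rcases Fin.exists_fin_two.1 ⟨f ⟨c, hc⟩, rfl⟩ with h | h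
    · exact Or.inl (congrArg Subtype.val (hf.1 (h.trans hd₀.symm)))
    · exact Or.inr (congrArg Subtype.val (hf.1 (h.trans hd₁.symm)))
  have hσ₁ : σ₁ ∈ stabilizer (Perm (Fin k)) (d₀ : Set (Fin k)) := by
    refine mem_stabilizer_of_numMeeting_add_compl_le ?_
    have h₀ := hmeet d₀
    have h₁ := hmeet d₁
    rw [hd₀, if_pos rfl] at h₀
    rw [hd₁, if_neg one_ne_zero, ← hcompl] at h₁
    omega
  have hσ₂ := mem_stabilizer_of_mem_permOrbits d₀.2
  rcases hπ.eq_empty_or_eq_univ_of_mem_stabilizer (mul_mem hσ₁ hσ₂) with h | h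
  · exact (nonempty_of_mem_permOrbits d₀.2).ne_empty h
  · rw [h, Set.compl_univ] at hcompl
    exact (nonempty_of_mem_permOrbits d₁.2).ne_empty hcompl.symm

/-- There is no triple `(σ₁, σ₂, f)` with `σ₁σ₂ = π` a `k`-cycle, `σ₂` having exactly
two orbits, `σ₁` having exactly `j₁ + j₂ - 2` orbits, `f` a bijective labeling of the
two orbits of `σ₂` by `{1,2}` (here `Fin 2`, with `0` standing for the label `1`),
such that for each orbit `d` of `σ₂` at most `j_{f(d)} - 1` orbits of `σ₁`
intersect `d` nontrivially. -/
theorem no_triple_with_small_meetings (k : ℕ) (hk : 1 ≤ k) (π : Equiv.Perm (Fin k))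
    (hπ : IsFullCycle π) (j₁ j₂ : ℕ) (hj₁ : 2 ≤ j₁) (hj₂ : 2 ≤ j₂) :
    ¬ ∃ (σ₁ σ₂ : Equiv.Perm (Fin k)) (f : ↥(permOrbits σ₂) → Fin 2),
        σ₁ * σ₂ = π ∧ kappa σ₂ = 2 ∧ kappa σ₁ = j₁ + j₂ - 2 ∧
        Function.Bijective f ∧
        ∀ d : ↥(permOrbits σ₂),
          numMeeting σ₁ (d : Set (Fin k)) ≤ (if f d = 0 then j₁ else j₂) - 1 :=
  no_triple_with_small_meetings_general k π hπ j₁ j₂ hj₁ hj₂
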